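/- Let h solve the height system with Bernoulli constant r. Then the flow force F(q) = ∫₀¹ ( (1 − h_q(q,p)²)/(2 h_p(q,p)²) − h(q,p) − Ω(p) + Ω(1) + r ) h_p(q,p) dp is independent of q, i.e. F'(q) = 0 for all q ∈ ℝ. -/

import Mathlib

open MeasureTheory Set Filter

noncomputable section

/-- `Omeg ω p = ∫₀^p ω(t) dt`, the primitive of the vorticity function. -/
def Omeg (ω : ℝ → ℝ) (p : ℝ) : ℝ := ∫ t in (0:ℝ)..p, ω t

/-- `s0 ω = sqrt (max_{p ∈ [0,1]} 2 Ω(p))`. -/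
def s0 (ω : ℝ → ℝ) : ℝ := Real.sqrt (sSup ((fun p => 2 * Omeg ω p) '' Icc (0:ℝ) 1))

/-- `Hp ω p s = (s² − 2Ω(p))^{-1/2}`. -/
def Hp (ω : ℝ → ℝ) (p s : ℝ) : ℝ := (Real.sqrt (s ^ 2 - 2 * Omeg ω p))⁻¹

/-- `Hfun ω p s = H(p; s) = ∫₀^p (s² − 2Ω(τ))^{-1/2} dτ`. -/
def Hfun (ω : ℝ → ℝ) (p s : ℝ) : ℝ := ∫ τ in (0:ℝ)..p, Hp ω τ s

/-- `dd ω s = d(s) = H(1; s)`. -/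
def dd (ω : ℝ → ℝ) (s : ℝ) : ℝ := Hfun ω 1 s

/-- `RR ω s = R(s) = s²/2 − Ω(1) + d(s)`, the Bernoulli constant of the stream solution. -/
def RR (ω : ℝ → ℝ) (s : ℝ) : ℝ := s ^ 2 / 2 - Omeg ω 1 + dd ω s

/-- `sigmaFun ω s r = σ(s; r)`. -/
def sigmaFun (ω : ℝ → ℝ) (s r : ℝ) : ℝ :=
  ∫ p in (0:ℝ)..1,
    (1 / (2 * (Hp ω p s) ^ 2) - Hfun ω p s - Omeg ω p + Omeg ω 1 + r) * Hp ω p s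

/-- Partial derivative in the first (horizontal) variable `q`. -/
def dq (f : ℝ → ℝ → ℝ) (q p : ℝ) : ℝ := deriv (fun x => f x p) q

/-- Partial derivative in the second (vertical) variable `p`. -/
def dp (f : ℝ → ℝ → ℝ) (q p : ℝ) : ℝ := deriv (fun y => f q y) p

/-- The height system with Bernoulli constant `r` on the strip `S = ℝ × [0,1]`. -/
structure HeightSol (ω : ℝ → ℝ) (r : ℝ) (h : ℝ → ℝ → ℝ) : Prop where
  smooth : ContDiff ℝ 2 (Function.uncurry h)
  hp_pos : ∀ q : ℝ, ∀ p ∈ Icc (0:ℝ) 1, 0 < dp h q p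
  pde : ∀ q : ℝ, ∀ p ∈ Icc (0:ℝ) 1,
    (1 + (dq h q p) ^ 2) / (dp h q p) ^ 2 * dp (dp h) q p
      - 2 * (dq h q p) / (dp h q p) * dp (dq h) q p
      + dq (dq h) q p - ω p * dp h q p = 0
  top : ∀ q : ℝ, (1 + (dq h q 1) ^ 2) / (2 * (dp h q 1) ^ 2) + h q 1 = r
  bot : ∀ q : ℝ, h q 0 = 0

/-- The flow force of a height function `h`, computed on the vertical line through `q`. -/
def flowForce (ω : ℝ → ℝ) (r : ℝ) (h : ℝ → ℝ → ℝ) (q : ℝ) : ℝ :=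
  ∫ p in (0:ℝ)..1,
    ((1 - (dq h q p) ^ 2) / (2 * (dp h q p) ^ 2) - h q p - Omeg ω p + Omeg ω 1 + r) * dp h q p

/-- `wfun ω s h = w^{(s)} = h − H(·; s)`. -/
def wfun (ω : ℝ → ℝ) (s : ℝ) (h : ℝ → ℝ → ℝ) (q p : ℝ) : ℝ := h q p - Hfun ω p s

/-- The flow force flux function `Φ^{(s)}`. -/
def Phi (ω : ℝ → ℝ) (s : ℝ) (h : ℝ → ℝ → ℝ) (q p : ℝ) : ℝ :=
  ∫ p' in (0:ℝ)..p,
    ((dp (wfun ω s h) q p') ^ 2 / (dp h q p' * (Hp ω p' s) ^ 2)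
      - (dq (wfun ω s h) q p') ^ 2 / dp h q p')

/-- `h ∈ C^{2,γ}(S̄)`: `h` is twice continuously differentiable, all partial derivatives of
order ≤ 2 are bounded on the strip, and the second-order derivatives are uniformly
γ-Hölder continuous on the strip. -/
def C2Holder (γ : ℝ) (h : ℝ → ℝ → ℝ) : Prop :=
  ContDiff ℝ 2 (Function.uncurry h) ∧
  (∀ g ∈ ([h, dq h, dp h, dq (dq h), dp (dq h), dp (dp h)] : List (ℝ → ℝ → ℝ)),
    ∃ M : ℝ, ∀ q : ℝ, ∀ p ∈ Icc (0:ℝ) 1, |g q p| ≤ M) ∧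
  (∀ g ∈ ([dq (dq h), dp (dq h), dp (dp h)] : List (ℝ → ℝ → ℝ)),
    ∃ C : ℝ, ∀ q q' : ℝ, ∀ p ∈ Icc (0:ℝ) 1, ∀ p' ∈ Icc (0:ℝ) 1,
      |g q p - g q' p'| ≤ C * Real.sqrt ((q - q') ^ 2 + (p - p') ^ 2) ^ γ)

end

/-!
Differentiating under the integral sign, `F'(q) = ∫₀¹ ∂_q f(q, p) dp` for the integrand `f` of
the flow force. The height equation says precisely that `∂_q f = ∂_p K` for the flux
`K = -h_q ((1 + h_q²) / (2 h_p²) + h + Ω - Ω(1) - r)`, so `F'(q) = K(q, 1) - K(q, 0)`. The Bernoulli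
condition makes `K` vanish on `p = 1`, and `h = 0` on `p = 0` forces `h_q = 0` there.
-/

open Function

section PartialDerivatives

variable {E : Type*} [NormedAddCommGroup E] [NormedSpace ℝ E]

theorem DifferentiableAt.hasDerivAt_horizontal {g : ℝ × ℝ → E} {q p : ℝ}
    (hg : DifferentiableAt ℝ g (q, p)) :
    HasDerivAt (fun x => g (x, p)) (fderiv ℝ g (q, p) (1, 0)) q :=
  hg.hasFDerivAt.comp_hasDerivAt q ((hasDerivAt_id q).prodMk (hasDerivAt_const q p))

theorem DifferentiableAt.hasDerivAt_vertical {g : ℝ × ℝ → E} {q p : ℝ}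
    (hg : DifferentiableAt ℝ g (q, p)) :
    HasDerivAt (fun y => g (q, y)) (fderiv ℝ g (q, p) (0, 1)) p :=
  hg.hasFDerivAt.comp_hasDerivAt p ((hasDerivAt_const p q).prodMk (hasDerivAt_id p))

variable {f : ℝ → ℝ → ℝ} {q p : ℝ}

theorem dq_eq_fderiv (hf : DifferentiableAt ℝ (uncurry f) (q, p)) :
    dq f q p = fderiv ℝ (uncurry f) (q, p) (1, 0) :=
  hf.hasDerivAt_horizontal.deriv

theorem dp_eq_fderiv (hf : DifferentiableAt ℝ (uncurry f) (q, p)) :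
    dp f q p = fderiv ℝ (uncurry f) (q, p) (0, 1) :=
  hf.hasDerivAt_vertical.deriv

theorem hasDerivAt_dq (hf : DifferentiableAt ℝ (uncurry f) (q, p)) :
    HasDerivAt (fun x => f x p) (dq f q p) q :=
  dq_eq_fderiv hf ▸ hf.hasDerivAt_horizontal

theorem hasDerivAt_dp (hf : DifferentiableAt ℝ (uncurry f) (q, p)) :
    HasDerivAt (fun y => f q y) (dp f q p) p :=
  dp_eq_fderiv hf ▸ hf.hasDerivAt_vertical

theorem ContDiff.uncurry_dq {n : WithTop ℕ∞} (hf : ContDiff ℝ (n + 1) (uncurry f)) :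
    ContDiff ℝ n (uncurry (dq f)) := by
  have hdiff : Differentiable ℝ (uncurry f) := hf.differentiable (by simp)
  have : uncurry (dq f) = fun z => fderiv ℝ (uncurry f) z (1, 0) :=
    funext fun z => dq_eq_fderiv (hdiff z)
  rw [this]
  exact (hf.fderiv_right le_rfl).clm_apply contDiff_const

theorem ContDiff.uncurry_dp {n : WithTop ℕ∞} (hf : ContDiff ℝ (n + 1) (uncurry f)) :
    ContDiff ℝ n (uncurry (dp f)) := by
  have hdiff : Differentiable ℝ (uncurry f) := hf.differentiable (by simp)
  have : uncurry (dp f) = fun z => fderiv ℝ (uncurry f) z (0, 1) :=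
    funext fun z => dp_eq_fderiv (hdiff z)
  rw [this]
  exact (hf.fderiv_right le_rfl).clm_apply contDiff_const

theorem dp_dq_eq_dq_dp (hf : ContDiff ℝ 2 (uncurry f)) (q p : ℝ) :
    dp (dq f) q p = dq (dp f) q p := by
  set A := fderiv ℝ (uncurry f)
  have hdiff : Differentiable ℝ (uncurry f) := hf.differentiable (by norm_num)
  have hA : Differentiable ℝ A :=
    (hf.fderiv_right (m := 1) (by norm_num)).differentiable one_ne_zero
  have hdq : dq f = fun x y => A (x, y) (1, 0) := funext₂ fun x y => dq_eq_fderiv (hdiff _)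
  have hdp : dp f = fun x y => A (x, y) (0, 1) := funext₂ fun x y => dp_eq_fderiv (hdiff _)
  have hqp : dp (dq f) q p = fderiv ℝ A (q, p) (0, 1) (1, 0) := by
    rw [hdq, dp]
    simpa using ((hA _).hasDerivAt_vertical.clm_apply (hasDerivAt_const p (1, 0))).deriv
  have hpq : dq (dp f) q p = fderiv ℝ A (q, p) (1, 0) (0, 1) := by
    rw [hdp, dq]
    simpa using ((hA _).hasDerivAt_horizontal.clm_apply (hasDerivAt_const q (0, 1))).deriv
  rw [hqp, hpq]
  exact hf.contDiffAt.isSymmSndFDerivAt (by simp) _ _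

end PartialDerivatives

section ParametricIntegral

variable {E : Type*} [NormedAddCommGroup E] [NormedSpace ℝ E]

theorem hasDerivAt_intervalIntegral_of_continuousOn {f f' : ℝ → ℝ → E} {a b : ℝ} (q₀ : ℝ)
    (hf : ContinuousOn (uncurry f) (univ ×ˢ uIcc a b))
    (hf' : ContinuousOn (uncurry f') (univ ×ˢ uIcc a b))
    (hderiv : ∀ q, ∀ p ∈ uIcc a b, HasDerivAt (fun x => f x p) (f' q p) q) :
    HasDerivAt (fun q => ∫ p in a..b, f q p) (∫ p in a..b, f' q₀ p) q₀ := by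
  have meas : ∀ {g : ℝ → ℝ → E}, ContinuousOn (uncurry g) (univ ×ˢ uIcc a b) →
      ∀ x, AEStronglyMeasurable (g x) (volume.restrict (uIoc a b)) := fun hg x =>
    ((hg.uncurry_left x (mem_univ _)).mono uIoc_subset_uIcc).aestronglyMeasurable
      measurableSet_uIoc
  obtain ⟨C, hC⟩ := (isCompact_closedBall q₀ 1 |>.prod isCompact_uIcc).exists_bound_of_continuousOn
    (hf'.mono (prod_mono (subset_univ _) le_rfl))
  refine (intervalIntegral.hasDerivAt_integral_of_dominated_loc_of_deriv_le
    (bound := fun _ => C) (Metric.ball_mem_nhds q₀ one_pos) (.of_forall (meas hf))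
    (hf.uncurry_left q₀ (mem_univ _)).intervalIntegrable (meas hf' q₀)
    (.of_forall fun p hp x hx =>
      hC (x, p) ⟨Metric.ball_subset_closedBall hx, uIoc_subset_uIcc hp⟩)
    intervalIntegrable_const
    (.of_forall fun p hp x _ => hderiv x p (uIoc_subset_uIcc hp))).2

end ParametricIntegral

section FlowForce

variable {ω : ℝ → ℝ} {r : ℝ} {h : ℝ → ℝ → ℝ}

theorem hasDerivAt_Omeg (hω : Continuous ω) (p : ℝ) : HasDerivAt (Omeg ω) (ω p) p :=
  (hω.integral_hasStrictDerivAt 0 p).hasDerivAt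

theorem continuous_Omeg (hω : Continuous ω) : Continuous (Omeg ω) :=
  continuous_iff_continuousAt.2 fun p => (hasDerivAt_Omeg hω p).continuousAt

noncomputable def flowForceDensity (ω : ℝ → ℝ) (r : ℝ) (h : ℝ → ℝ → ℝ) (q p : ℝ) : ℝ :=
  ((1 - (dq h q p) ^ 2) / (2 * (dp h q p) ^ 2) - h q p - Omeg ω p + Omeg ω 1 + r) * dp h q p

noncomputable def flowForceFlux (ω : ℝ → ℝ) (r : ℝ) (h : ℝ → ℝ → ℝ) (q p : ℝ) : ℝ :=
  -dq h q p * ((1 + (dq h q p) ^ 2) / (2 * (dp h q p) ^ 2) + h q p + Omeg ω p - Omeg ω 1 - r)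

noncomputable def dqFlowForceDensity (ω : ℝ → ℝ) (r : ℝ) (h : ℝ → ℝ → ℝ) (q p : ℝ) : ℝ :=
  -(dq h q p * dq (dq h) q p) / dp h q p
    - (1 - (dq h q p) ^ 2) * dq (dp h) q p / (2 * (dp h q p) ^ 2)
    - dq h q p * dp h q p
    - (h q p + Omeg ω p - Omeg ω 1 - r) * dq (dp h) q p

theorem continuousOn_flowForceDensity (hω : Continuous ω) (hh : ContDiff ℝ 2 (uncurry h))
    (hpos : ∀ q, ∀ p ∈ Icc (0:ℝ) 1, 0 < dp h q p) :
    ContinuousOn (uncurry (flowForceDensity ω r h)) (univ ×ˢ Icc 0 1) := by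
  have ha : Continuous fun z : ℝ × ℝ => dq h z.1 z.2 := (hh.uncurry_dq (n := 1)).continuous
  have hb : Continuous fun z : ℝ × ℝ => dp h z.1 z.2 := (hh.uncurry_dp (n := 1)).continuous
  have hO := continuous_Omeg hω
  have hc : Continuous fun z : ℝ × ℝ => h z.1 z.2 := hh.continuous
  have hne : ∀ z ∈ (univ ×ˢ Icc (0:ℝ) 1 : Set (ℝ × ℝ)), 2 * dp h z.1 z.2 ^ 2 ≠ 0 :=
    fun z hz => by have := hpos z.1 z.2 hz.2; positivity
  simp only [flowForceDensity, uncurry_def]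
  fun_prop (disch := assumption)

theorem continuousOn_dqFlowForceDensity (hω : Continuous ω) (hh : ContDiff ℝ 2 (uncurry h))
    (hpos : ∀ q, ∀ p ∈ Icc (0:ℝ) 1, 0 < dp h q p) :
    ContinuousOn (uncurry (dqFlowForceDensity ω r h)) (univ ×ˢ Icc 0 1) := by
  have ha : Continuous fun z : ℝ × ℝ => dq h z.1 z.2 := (hh.uncurry_dq (n := 1)).continuous
  have hb : Continuous fun z : ℝ × ℝ => dp h z.1 z.2 := (hh.uncurry_dp (n := 1)).continuous
  have haq : Continuous fun z : ℝ × ℝ => dq (dq h) z.1 z.2 :=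
    ((hh.uncurry_dq (n := 1)).uncurry_dq (n := 0)).continuous
  have hbq : Continuous fun z : ℝ × ℝ => dq (dp h) z.1 z.2 :=
    ((hh.uncurry_dp (n := 1)).uncurry_dq (n := 0)).continuous
  have hO := continuous_Omeg hω
  have hc : Continuous fun z : ℝ × ℝ => h z.1 z.2 := hh.continuous
  have hne : ∀ z ∈ (univ ×ˢ Icc (0:ℝ) 1 : Set (ℝ × ℝ)), dp h z.1 z.2 ≠ 0 :=
    fun z hz => (hpos z.1 z.2 hz.2).ne'
  have hne₂ : ∀ z ∈ (univ ×ˢ Icc (0:ℝ) 1 : Set (ℝ × ℝ)), 2 * dp h z.1 z.2 ^ 2 ≠ 0 :=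
    fun z hz => by have := hne z hz; positivity
  simp only [dqFlowForceDensity, uncurry_def]
  fun_prop (disch := assumption)

theorem hasDerivAt_flowForceDensity (hh : ContDiff ℝ 2 (uncurry h)) {q p : ℝ}
    (hb : dp h q p ≠ 0) :
    HasDerivAt (flowForceDensity ω r h · p) (dqFlowForceDensity ω r h q p) q := by
  have hdh := hasDerivAt_dq ((hh.differentiable two_ne_zero) (q, p))
  have hdhq := hasDerivAt_dq (((hh.uncurry_dq (n := 1)).differentiable one_ne_zero) (q, p))
  have hdhp := hasDerivAt_dq (((hh.uncurry_dp (n := 1)).differentiable one_ne_zero) (q, p))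
  have hden : 2 * dp h q p ^ 2 ≠ 0 := by positivity
  have := ((((hdhq.pow 2).const_sub 1).div ((hdhp.pow 2).const_mul 2) hden).sub hdh
    |>.sub_const (Omeg ω p) |>.add_const (Omeg ω 1) |>.add_const r).mul hdhp
  refine this.congr_deriv ?_
  simp only [dqFlowForceDensity, Pi.sub_apply, Pi.div_apply, Pi.pow_apply, Nat.cast_ofNat,
    Nat.add_one_sub_one, pow_one]
  field_simp
  ring

theorem hasDerivAt_flowForceFlux (hω : Continuous ω) (hsol : HeightSol ω r h) {q p : ℝ}
    (hp : p ∈ Icc (0:ℝ) 1) :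
    HasDerivAt (flowForceFlux ω r h q) (dqFlowForceDensity ω r h q p) p := by
  have hh := hsol.smooth
  have hb := (hsol.hp_pos q p hp).ne'
  have pde := hsol.pde q p hp
  have hdh := hasDerivAt_dp ((hh.differentiable two_ne_zero) (q, p))
  have hdhq := hasDerivAt_dp (((hh.uncurry_dq (n := 1)).differentiable one_ne_zero) (q, p))
  have hdhp := hasDerivAt_dp (((hh.uncurry_dp (n := 1)).differentiable one_ne_zero) (q, p))
  have hden : 2 * dp h q p ^ 2 ≠ 0 := by positivity
  have := hdhq.neg.mul ((((hdhq.pow 2).const_add 1).div ((hdhp.pow 2).const_mul 2) hden).add hdh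
    |>.add (hasDerivAt_Omeg hω p) |>.sub_const (Omeg ω 1) |>.sub_const r)
  refine this.congr_deriv ?_
  simp only [dqFlowForceDensity, Pi.add_apply, Pi.neg_apply, Pi.div_apply, Pi.pow_apply,
    Nat.cast_ofNat, Nat.add_one_sub_one, pow_one]
  rw [← dp_dq_eq_dq_dp hh]
  field_simp at pde ⊢
  linear_combination (2 * dq h q p) * pde

theorem flowForceFlux_one (hsol : HeightSol ω r h) (q : ℝ) : flowForceFlux ω r h q 1 = 0 := by
  rw [flowForceFlux]
  linear_combination (-dq h q 1) * hsol.top q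

theorem flowForceFlux_zero (hbot : ∀ q, h q 0 = 0) (q : ℝ) : flowForceFlux ω r h q 0 = 0 := by
  have : dq h q 0 = 0 := by simp [dq, hbot]
  simp [flowForceFlux, this]

end FlowForce

/-- for a solution `h` of the height system, the flow force
`F(q) = ∫₀¹ ((1 − h_q²)/(2h_p²) − h − Ω + Ω(1) + r) h_p dp` is independent of `q`, i.e.
`F'(q) = 0` for all `q`. -/
theorem stmt11 (ω : ℝ → ℝ) (hω : Continuous ω) (r : ℝ) (h : ℝ → ℝ → ℝ)
    (hsol : HeightSol ω r h) :
    ∀ q : ℝ, HasDerivAt (flowForce ω r h) 0 q := by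
  intro q
  have hh := hsol.smooth
  have hpos := hsol.hp_pos
  have hI : uIcc (0:ℝ) 1 = Icc 0 1 := uIcc_of_le zero_le_one
  have hG := continuousOn_dqFlowForceDensity (r := r) hω hh hpos
  have hderiv : HasDerivAt (flowForce ω r h) (∫ p in (0:ℝ)..1, dqFlowForceDensity ω r h q p) q :=
    hasDerivAt_intervalIntegral_of_continuousOn q
      (hI ▸ continuousOn_flowForceDensity hω hh hpos) (hI ▸ hG)
      fun x p hp => hasDerivAt_flowForceDensity hh (hpos x p (hI ▸ hp)).ne'
  have hftc : ∫ p in (0:ℝ)..1, dqFlowForceDensity ω r h q p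
      = flowForceFlux ω r h q 1 - flowForceFlux ω r h q 0 :=
    intervalIntegral.integral_eq_sub_of_hasDerivAt
      (fun p hp => hasDerivAt_flowForceFlux hω hsol (hI ▸ hp))
      ((hI ▸ hG.uncurry_left q (mem_univ _)).intervalIntegrable)
  rwa [hftc, flowForceFlux_one hsol, flowForceFlux_zero hsol.bot, sub_zero] at hderiv
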